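/- arXiv:1508.04541 — 2 statements merged into one kernel-verified Lean document; each statement's English description precedes it below -/
import Mathlib

section
/- For every (t+1)-connected graph H and every non-negative integer s < |V(H)|, every (K_s,t)-cockade is H-minor-free. -/
open SimpleGraph

/-- The Petersen graph: the Kneser graph whose vertices are the 2-element subsets of a
5-element set, with two vertices adjacent iff the corresponding subsets are disjoint. -/
def Petersen : SimpleGraph {s : Finset (Fin 5) // s.card = 2} where
  Adj a b := Disjoint a.1 b.1
  symm := ⟨fun _ _ h => h.symm⟩
  loopless := ⟨fun a h => by
    have h1 : a.1 = ⊥ := disjoint_self.mp h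
    have h2 := a.2
    rw [h1] at h2
    simp at h2⟩

/-- `H` is a minor of `G`: there is a family of nonempty, pairwise-disjoint connected
branch sets in `G`, one for each vertex of `H`, with an edge of `G` between the branch
sets corresponding to each edge of `H`. -/
def IsMinor {W V : Type*} (H : SimpleGraph W) (G : SimpleGraph V) : Prop :=
  ∃ f : W → Set V,
    (∀ w, (G.induce (f w)).Connected) ∧
    (∀ w₁ w₂ : W, w₁ ≠ w₂ → Disjoint (f w₁) (f w₂)) ∧
    ∀ ⦃w₁ w₂ : W⦄, H.Adj w₁ w₂ → ∃ v₁ ∈ f w₁, ∃ v₂ ∈ f w₂, G.Adj v₁ v₂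

/-- The vertex set `A` carries a `(K_s, t)`-cockade structure in `G`: either `G[A]` is a
complete graph on `s` vertices, or `A` is the union of two proper subsets `B` and `C`,
each carrying a cockade structure, whose intersection is a clique on `t` vertices, with
no edges of `G` joining `B \ C` to `C \ B`. -/
inductive CockadeOn {V : Type*} (G : SimpleGraph V) (s t : ℕ) : Set V → Prop
  | base (A : Set V) (hcard : A.ncard = s) (hclique : G.IsClique A) : CockadeOn G s t A
  | glue (A B C : Set V) (hun : B ∪ C = A) (hB : B ≠ A) (hC : C ≠ A)
      (hcard : (B ∩ C).ncard = t) (hclique : G.IsClique (B ∩ C))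
      (hcross : ∀ x ∈ B \ C, ∀ y ∈ C \ B, ¬ G.Adj x y)
      (h1 : CockadeOn G s t B) (h2 : CockadeOn G s t C) : CockadeOn G s t A

/-- `G` is a `(K_9, 2)`-cockade. -/
def IsK9Cockade {V : Type*} (G : SimpleGraph V) : Prop := CockadeOn G 9 2 Set.univ

/-- `G` is a spanning subgraph of a `(K_9, 2)`-cockade
(equivalently, a `(K_9,2)`-cockade minus some set of edges). -/
def SpanningSubgraphOfK9Cockade {V : Type*} (G : SimpleGraph V) : Prop :=
  ∃ G' : SimpleGraph V, G ≤ G' ∧ IsK9Cockade G'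

/-- A separation of `G`: a pair `(A, B)` of vertex subsets with `A \ B` and `B \ A`
nonempty such that every edge of `G` has both endpoints in `A` or both in `B`. -/
def IsSep {V : Type*} (G : SimpleGraph V) (A B : Set V) : Prop :=
  (A \ B).Nonempty ∧ (B \ A).Nonempty ∧
    ∀ ⦃x y : V⦄, G.Adj x y → (x ∈ A ∧ y ∈ A) ∨ (x ∈ B ∧ y ∈ B)

/-- `G` is `k`-connected: it has at least `k + 1` vertices and no separation of order
less than `k`. -/
def KConnected {V : Type*} (k : ℕ) (G : SimpleGraph V) : Prop :=
  k + 1 ≤ Nat.card V ∧ ∀ A B : Set V, IsSep G A B → k ≤ (A ∩ B).ncard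

/-- The number of edges of `G`. -/
noncomputable def edgeCount {V : Type*} (G : SimpleGraph V) : ℕ := Nat.card G.edgeSet

/-- The closed neighbourhood `N[v]`. -/
def closedNbhd {V : Type*} (G : SimpleGraph V) (v : V) : Set V :=
  insert v (G.neighborSet v)

/-- The degree of a vertex, as the cardinality of its neighbour set. -/
noncomputable def deg {V : Type*} (G : SimpleGraph V) (v : V) : ℕ :=
  (G.neighborSet v).ncard

/-- The neighbourhood `N(C)` of a vertex set `C`: all vertices outside `C`
adjacent to some vertex of `C`. -/
def setNbhd {V : Type*} (G : SimpleGraph V) (C : Set V) : Set V :=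
  {u | u ∉ C ∧ ∃ x ∈ C, G.Adj u x}

/-- `C` is (the vertex set of) a connected component of the induced subgraph `G[S]`. -/
def IsCompOf {V : Type*} (G : SimpleGraph V) (S C : Set V) : Prop :=
  C ⊆ S ∧ (G.induce C).Connected ∧ ∀ x ∈ C, ∀ y ∈ S, G.Adj x y → y ∈ C

/-- `G` is a minor-minimal counterexample: (i) `G` has at least 3 vertices;
(ii) `G` has at least `5n - 11` edges; (iii) `G` is not a spanning subgraph of a
`(K_9,2)`-cockade; (iv) the Petersen graph is not a minor of `G`; (v) every proper
minor `H` of `G` with at least three vertices has at most `5|V(H)| - 12` edges or is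
a spanning subgraph of a `(K_9,2)`-cockade. -/
def MinCounterexample {V : Type} [Fintype V] (G : SimpleGraph V) : Prop :=
  3 ≤ Nat.card V ∧
  (5 : ℤ) * (Nat.card V : ℤ) - 11 ≤ (edgeCount G : ℤ) ∧
  ¬ SpanningSubgraphOfK9Cockade G ∧
  ¬ IsMinor Petersen G ∧
  ∀ (W : Type) [Fintype W], ∀ H : SimpleGraph W,
    IsMinor H G → ¬ Nonempty (H ≃g G) → 3 ≤ Nat.card W →
      ((edgeCount H : ℤ) ≤ 5 * (Nat.card W : ℤ) - 12 ∨ SpanningSubgraphOfK9Cockade H)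

/-- The set `𝓛`: vertices `v` of degree at most 9 such that no vertex `u` satisfies
`N[u] ⊊ N[v]`. -/
def goodSet {V : Type*} (G : SimpleGraph V) : Set V :=
  {v | deg G v ≤ 9 ∧ ¬ ∃ u, closedNbhd G u ⊂ closedNbhd G v}

/-- Planarity, via Wagner's characterisation: a graph is planar iff it has
neither a `K₅` minor nor a `K₃,₃` minor. -/
def IsPlanar {V : Type*} (G : SimpleGraph V) : Prop :=
  ¬ IsMinor (completeGraph (Fin 5)) G ∧
  ¬ IsMinor (completeBipartiteGraph (Fin 3) (Fin 3)) G

/-- The join `K₅ + complement (K_m)`. -/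
def K5Join (m : ℕ) : SimpleGraph (Fin 5 ⊕ Fin m) where
  Adj a b := a ≠ b ∧ (a.isLeft = true ∨ b.isLeft = true)
  symm := ⟨fun _ _ h => ⟨h.1.symm, h.2.symm⟩⟩
  loopless := ⟨fun _ h => h.1 rfl⟩

/-!
Induct along the cockade construction, carrying a model of `H` whose branch sets lie in the
current vertex set. At a base `K_s` the `|V(H)| > s` disjoint branch sets do not fit. At a
gluing `A = B ∪ C` along the clique `B ∩ C`, a connected branch set meeting both sides meets
the cut. So if some branch sets avoid `C` and others avoid `B`, the vertices of `H` whose branch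
sets meet `B`, resp. `C`, form a separation of `H` of order at most `|B ∩ C| = t`. Otherwise
all branch sets meet one side, say `C`, and cutting them down to `C` gives a model in `G[C]`:
a branch set leaves `C` only through the clique `B ∩ C`, which keeps it connected and through
which the edges of the model into `B \ C` can be rerouted.
-/

open Function

structure IsMinorModel {W V : Type*} (H : SimpleGraph W) (G : SimpleGraph V) (f : W → Set V) :
    Prop where
  connected (w : W) : (G.induce (f w)).Connected
  disjoint : Pairwise (Disjoint on f)
  adj ⦃w₁ w₂ : W⦄ : H.Adj w₁ w₂ → ∃ v₁ ∈ f w₁, ∃ v₂ ∈ f w₂, G.Adj v₁ v₂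

def meeting {W V : Type*} (f : W → Set V) (B : Set V) : Set W := {w | (f w ∩ B).Nonempty}

def NoCrossEdges {V : Type*} (G : SimpleGraph V) (B C : Set V) : Prop :=
  ∀ x ∈ B \ C, ∀ y ∈ C \ B, ¬ G.Adj x y

namespace NoCrossEdges

variable {V : Type*} {G : SimpleGraph V} {B C S : Set V}

lemma symm (h : NoCrossEdges G B C) : NoCrossEdges G C B :=
  fun x hx y hy hxy => h y hy x hx hxy.symm

lemma mem_and_mem_or_of_adj (h : NoCrossEdges G B C) {u v : V} (hu : u ∈ B ∪ C)
    (hv : v ∈ B ∪ C) (huv : G.Adj u v) : (u ∈ B ∧ v ∈ B) ∨ (u ∈ C ∧ v ∈ C) := by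
  have h₁ : u ∈ B \ C → v ∉ C \ B := fun hu' hv' => h u hu' v hv' huv
  have h₂ : v ∈ B \ C → u ∉ C \ B := fun hv' hu' => h v hv' u hu' huv.symm
  simp only [Set.mem_union, Set.mem_sdiff] at *
  tauto

lemma exists_mem_inter_reachable (h : NoCrossEdges G B C) (hS : S ⊆ B ∪ C)
    (hconn : (G.induce S).Connected) {x b : V} (hx : x ∈ S ∩ C) (hb : b ∈ S \ C) :
    ∃ c, ∃ hc : c ∈ S ∩ C, c ∈ B ∧ (G.induce (S ∩ C)).Reachable ⟨x, hx⟩ ⟨c, hc⟩ := by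
  -- Take the edge along which a walk from `x` to `b` leaves the component of `x` in `G[S ∩ C]`.
  let R : Set S := {v | ∃ hv : v.1 ∈ S ∩ C, (G.induce (S ∩ C)).Reachable ⟨x, hx⟩ ⟨v.1, hv⟩}
  obtain ⟨p⟩ := hconn.preconnected ⟨x, hx.1⟩ ⟨b, hb.1⟩
  obtain ⟨d, -, ⟨hd₁, hreach⟩, hd₂⟩ :=
    p.exists_boundary_dart R ⟨hx, .rfl⟩ fun ⟨hbC, _⟩ => hb.2 hbC.2
  have hadj : G.Adj d.fst d.snd := d.adj
  by_cases hsnd : d.snd.1 ∈ C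
  · exact absurd ⟨⟨d.snd.2, hsnd⟩, hreach.trans (Adj.reachable hadj)⟩ hd₂
  · refine ⟨d.fst, hd₁, ?_, hreach⟩
    by_contra hfst
    exact h _ ⟨(hS d.snd.2).resolve_right hsnd, hsnd⟩ _ ⟨hd₁.2, hfst⟩ hadj.symm

lemma inter_inter_nonempty (h : NoCrossEdges G B C) (hS : S ⊆ B ∪ C)
    (hconn : (G.induce S).Connected) (hB : (S ∩ B).Nonempty) (hC : (S ∩ C).Nonempty) :
    (S ∩ (B ∩ C)).Nonempty := by
  obtain ⟨b, hbS, hbB⟩ := hB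
  by_cases hbC : b ∈ C
  · exact ⟨b, hbS, hbB, hbC⟩
  obtain ⟨x, hx⟩ := hC
  obtain ⟨c, hc, hcB, -⟩ := h.exists_mem_inter_reachable hS hconn hx ⟨hbS, hbC⟩
  exact ⟨c, hc.1, hcB, hc.2⟩

lemma induce_inter_connected (h : NoCrossEdges G B C) (hclique : G.IsClique (B ∩ C))
    (hS : S ⊆ B ∪ C) (hconn : (G.induce S).Connected) (hne : (S ∩ C).Nonempty) :
    (G.induce (S ∩ C)).Connected := by
  by_cases hSC : S ⊆ C
  · rwa [Set.inter_eq_left.mpr hSC]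
  obtain ⟨b, hbS, hbC⟩ := Set.not_subset.mp hSC
  have hcut (x : ↥(S ∩ C)) := h.exists_mem_inter_reachable hS hconn x.2 ⟨hbS, hbC⟩
  obtain ⟨c₀, hc₀, hc₀B, -⟩ := hcut ⟨hne.some, hne.some_mem⟩
  refine (connected_iff_exists_forall_reachable _).mpr ⟨⟨c₀, hc₀⟩, fun y => ?_⟩
  obtain ⟨c, hc, hcB, hyc⟩ := hcut y
  refine Reachable.trans ?_ hyc.symm
  by_cases hc₀c : c₀ = c
  · subst hc₀c; rfl
  · exact Adj.reachable (hclique ⟨hc₀B, hc₀.2⟩ ⟨hcB, hc.2⟩ hc₀c)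

end NoCrossEdges

lemma ncard_le_ncard_of_pairwise_disjoint {W V : Type*} {f : W → Set V}
    (hd : Pairwise (Disjoint on f)) {T : Set W} {K : Set V} (hK : K.Finite)
    (hT : ∀ w ∈ T, (f w ∩ K).Nonempty) : T.ncard ≤ K.ncard := by
  choose g hg using hT
  have := hK.to_subtype
  rw [← Nat.card_coe_set_eq, ← Nat.card_coe_set_eq]
  refine Nat.card_le_card_of_injective (fun w : T => ⟨g w w.2, (hg w w.2).2⟩) fun w₁ w₂ h => ?_
  by_contra hne
  exact (hd (Subtype.coe_ne_coe.mpr hne)).ne_of_mem (hg _ w₁.2).1 (hg _ w₂.2).1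
    (congrArg Subtype.val h)

namespace IsMinorModel

variable {W V : Type*} {H : SimpleGraph W} {G : SimpleGraph V} {f : W → Set V} {B C : Set V}

lemma nonempty (hf : IsMinorModel H G f) (w : W) : (f w).Nonempty :=
  Set.nonempty_coe_sort.mp (hf.connected w).nonempty

lemma mem_meeting_union (hf : IsMinorModel H G f) (hsub : ∀ w, f w ⊆ B ∪ C) (w : W) :
    w ∈ meeting f B ∪ meeting f C := by
  obtain ⟨v, hv⟩ := hf.nonempty w
  exact (hsub w hv).imp (fun h => ⟨v, hv, h⟩) (fun h => ⟨v, hv, h⟩)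

lemma isSep_meeting (hf : IsMinorModel H G f) (hBC : NoCrossEdges G B C)
    (hsub : ∀ w, f w ⊆ B ∪ C) (h₁ : (meeting f B \ meeting f C).Nonempty)
    (h₂ : (meeting f C \ meeting f B).Nonempty) : IsSep H (meeting f B) (meeting f C) := by
  refine ⟨h₁, h₂, fun w₁ w₂ h => ?_⟩
  obtain ⟨u, hu, v, hv, huv⟩ := hf.adj h
  exact (hBC.mem_and_mem_or_of_adj (hsub w₁ hu) (hsub w₂ hv) huv).imp
    (fun h => ⟨⟨u, hu, h.1⟩, ⟨v, hv, h.2⟩⟩) (fun h => ⟨⟨u, hu, h.1⟩, ⟨v, hv, h.2⟩⟩)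

lemma ncard_meeting_inter_le [Finite V] (hf : IsMinorModel H G f) (hBC : NoCrossEdges G B C)
    (hsub : ∀ w, f w ⊆ B ∪ C) : (meeting f B ∩ meeting f C).ncard ≤ (B ∩ C).ncard :=
  ncard_le_ncard_of_pairwise_disjoint hf.disjoint (Set.toFinite _) fun w hw =>
    hBC.inter_inter_nonempty (hsub w) (hf.connected w) hw.1 hw.2

lemma inter (hf : IsMinorModel H G f) (hBC : NoCrossEdges G B C) (hclique : G.IsClique (B ∩ C))
    (hsub : ∀ w, f w ⊆ B ∪ C) (hmeet : ∀ w, (f w ∩ C).Nonempty) :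
    IsMinorModel H G (fun w => f w ∩ C) where
  connected w := hBC.induce_inter_connected hclique (hsub w) (hf.connected w) (hmeet w)
  disjoint _ _ h := (hf.disjoint h).mono Set.inter_subset_left Set.inter_subset_left
  adj w₁ w₂ h := by
    obtain ⟨u, hu, v, hv, huv⟩ := hf.adj h
    have hne {x y : V} (hx : x ∈ f w₁) (hy : y ∈ f w₂) : x ≠ y :=
      (hf.disjoint h.ne).ne_of_mem hx hy
    have hcut {w : W} {x : V} (hx : x ∈ f w) (hxC : x ∉ C) : ∃ c ∈ f w ∩ C, c ∈ B := by
      obtain ⟨c, hc, hcB, hcC⟩ := hBC.inter_inter_nonempty (hsub w) (hf.connected w)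
        ⟨x, hx, (hsub w hx).resolve_right hxC⟩ (hmeet w)
      exact ⟨c, ⟨hc, hcC⟩, hcB⟩
    have hedge := hBC.mem_and_mem_or_of_adj (hsub w₁ hu) (hsub w₂ hv) huv
    by_cases huC : u ∈ C <;> by_cases hvC : v ∈ C
    · exact ⟨u, ⟨hu, huC⟩, v, ⟨hv, hvC⟩, huv⟩
    · obtain ⟨c, hc, hcB⟩ := hcut hv hvC
      have huB : u ∈ B := by tauto
      exact ⟨u, ⟨hu, huC⟩, c, hc, hclique ⟨huB, huC⟩ ⟨hcB, hc.2⟩ (hne hu hc.1)⟩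
    · obtain ⟨c, hc, hcB⟩ := hcut hu huC
      have hvB : v ∈ B := by tauto
      exact ⟨c, hc, v, ⟨hv, hvC⟩, hclique ⟨hcB, hc.2⟩ ⟨hvB, hvC⟩ (hne hc.1 hv)⟩
    · obtain ⟨c₁, hc₁, hc₁B⟩ := hcut hu huC
      obtain ⟨c₂, hc₂, hc₂B⟩ := hcut hv hvC
      exact ⟨c₁, hc₁, c₂, hc₂, hclique ⟨hc₁B, hc₁.2⟩ ⟨hc₂B, hc₂.2⟩ (hne hc₁.1 hc₂.1)⟩

end IsMinorModel

theorem CockadeOn.not_isMinorModel {W V : Type*} [Finite V] {H : SimpleGraph W}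
    {G : SimpleGraph V} {s t : ℕ} (hconn : KConnected (t + 1) H) (hs : s < Nat.card W)
    {A : Set V} (hA : CockadeOn G s t A) {f : W → Set V} (hf : IsMinorModel H G f)
    (hsub : ∀ w, f w ⊆ A) : False := by
  induction hA generalizing f with
  | base A hcard _ =>
    have hle := ncard_le_ncard_of_pairwise_disjoint hf.disjoint (Set.toFinite A)
      (T := Set.univ) fun w _ => by
        rw [Set.inter_eq_left.mpr (hsub w)]
        exact hf.nonempty w
    rw [Set.ncard_univ] at hle
    omega
  | glue A B C hun _ _ hcard hclique hcross _ _ ihB ihC =>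
    subst hun
    have hBC : NoCrossEdges G B C := hcross
    by_cases hsep : (meeting f B \ meeting f C).Nonempty ∧ (meeting f C \ meeting f B).Nonempty
    · have hord := hconn.2 _ _ (hf.isSep_meeting hBC hsub hsep.1 hsep.2)
      have := hf.ncard_meeting_inter_le hBC hsub
      omega
    simp only [not_and_or, Set.not_nonempty_iff_eq_empty, Set.sdiff_eq_empty] at hsep
    rcases hsep with hBC' | hCB'
    · refine ihC (hf.inter hBC hclique hsub fun w => ?_) fun _ => Set.inter_subset_right
      exact (hf.mem_meeting_union hsub w).elim (fun h => hBC' h) id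
    · refine ihB (hf.inter hBC.symm (Set.inter_comm B C ▸ hclique)
        (fun w => Set.union_comm B C ▸ hsub w) fun w => ?_) fun _ => Set.inter_subset_right
      exact (hf.mem_meeting_union hsub w).elim id (fun h => hCB' h)

theorem cockade_minor_free_general {WH : Type} (H : SimpleGraph WH) (t s : ℕ)
    (hconn : KConnected (t + 1) H) (hs : s < Nat.card WH)
    {V : Type} [Fintype V] (G : SimpleGraph V) (hG : CockadeOn G s t Set.univ) :
    ¬ IsMinor H G := by
  rintro ⟨f, hc, hd, he⟩
  exact hG.not_isMinorModel hconn hs ⟨hc, fun _ _ h => hd _ _ h, he⟩ fun _ => Set.subset_univ _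

/-- For every `(t+1)`-connected graph `H` and every non-negative
integer `s < |V(H)|`, every `(K_s, t)`-cockade is `H`-minor-free. -/
theorem cockade_minor_free {WH : Type} [Fintype WH] (H : SimpleGraph WH) (t s : ℕ)
    (hconn : KConnected (t + 1) H) (hs : s < Nat.card WH)
    {V : Type} [Fintype V] (G : SimpleGraph V) (hG : CockadeOn G s t Set.univ) :
    ¬ IsMinor H G :=
  cockade_minor_free_general H t s hconn hs G hG
end

section
/- Let x, y and z be distinct vertices of a graph H. There is a K_3-minor of H rooted at {x,y,z} if and only if there is no vertex v ∈ V(H) for which the vertices of {x,y,z} ∖ {v} lie in distinct connected components of H − v. -/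
open SimpleGraph

/-!
A vertex `v` meets at most one fragment of a rooted `K₃`-minor, and the other two fragments join
their roots in `H - v`; so a rooted `K₃`-minor leaves no separating vertex.

Conversely, growing fragments along walks that avoid a root gives a path-shaped configuration: a
centre fragment, the vertex set of a walk starting at its root, adjacent to two disjoint fragments
holding the other two roots. Induct on the centre walk and look at its last vertex `u`. If the rest
of the centre still touches both sides, drop `u`; if it loses one side, hand `u` over to that side.
If it loses both, `u` is adjacent to all three fragments. Since `u` does not separate the roots,
some walk avoiding `u` joins two roots. Growing the first fragment along that walk until it reaches
another fragment makes those two adjacent, and adding `u` to the third fragment closes the triangle.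
-/

namespace SimpleGraph

variable {V : Type*} {G : SimpleGraph V}

def SetAdj (G : SimpleGraph V) (A B : Set V) : Prop :=
  ∃ a ∈ A, ∃ b ∈ B, G.Adj a b

/-- Every walk between two distinct vertices of `R` passes through `v`: the vertices of
`R \ {v}` lie in distinct components of `G - v`. -/
def Separates (G : SimpleGraph V) (v : V) (R : Set V) : Prop :=
  ∀ a ∈ R, ∀ b ∈ R, a ≠ b → ∀ w : G.Walk a b, v ∈ w.support

def RootedTriangle (G : SimpleGraph V) (x y z : V) : Prop :=
  ∃ X Y Z : Set V,
    (G.induce X).Connected ∧ (G.induce Y).Connected ∧ (G.induce Z).Connected ∧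
    Disjoint X Y ∧ Disjoint X Z ∧ Disjoint Y Z ∧
    G.SetAdj X Y ∧ G.SetAdj X Z ∧ G.SetAdj Y Z ∧
    x ∈ X ∧ y ∈ Y ∧ z ∈ Z

lemma SetAdj.symm {A B : Set V} (h : G.SetAdj A B) : G.SetAdj B A := by
  obtain ⟨a, ha, b, hb, hab⟩ := h
  exact ⟨b, hb, a, ha, hab.symm⟩

lemma SetAdj.mono_right {A B B' : Set V} (h : G.SetAdj A B) (hB : B ⊆ B') : G.SetAdj A B' := by
  obtain ⟨a, ha, b, hb, hab⟩ := h
  exact ⟨a, ha, b, hB hb, hab⟩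

lemma SetAdj.exists_adj_of_not_setAdj {A B : Set V} {u : V} (h : G.SetAdj (insert u A) B)
    (hA : ¬ G.SetAdj A B) : ∃ b ∈ B, G.Adj u b := by
  obtain ⟨a, rfl | ha, b, hb, hab⟩ := h
  · exact ⟨b, hb, hab⟩
  · exact absurd ⟨a, ha, b, hb, hab⟩ hA

lemma RootedTriangle.swap₁₂ {x y z : V} (h : G.RootedTriangle x y z) :
    G.RootedTriangle y x z := by
  obtain ⟨X, Y, Z, hX, hY, hZ, hXY, hXZ, hYZ, aXY, aXZ, aYZ, hx, hy, hz⟩ := h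
  exact ⟨Y, X, Z, hY, hX, hZ, hXY.symm, hYZ, hXZ, aXY.symm, aYZ, aXZ, hy, hx, hz⟩

lemma RootedTriangle.swap₂₃ {x y z : V} (h : G.RootedTriangle x y z) :
    G.RootedTriangle x z y := by
  obtain ⟨X, Y, Z, hX, hY, hZ, hXY, hXZ, hYZ, aXY, aXZ, aYZ, hx, hy, hz⟩ := h
  exact ⟨X, Z, Y, hX, hZ, hY, hXZ, hXY, hYZ.symm, aXZ, aXY, aYZ.symm, hx, hz, hy⟩

lemma reachable_induce_iff {s : Set V} {a b : s} :
    (G.induce s).Reachable a b ↔ ∃ w : G.Walk a b, ∀ x ∈ w.support, x ∈ s := by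
  constructor
  · rintro ⟨w⟩
    refine ⟨w.map (Embedding.induce s).toHom, fun x hx => ?_⟩
    obtain ⟨y, -, rfl⟩ := List.mem_map.1 (w.support_map _ ▸ hx)
    exact y.2
  · rintro ⟨w, hw⟩
    exact ⟨w.induce s hw⟩

lemma separates_iff_not_reachable {v : V} {R : Set V} :
    G.Separates v R ↔ ∀ a b, a ∈ R → b ∈ R → ∀ (hav : a ≠ v) (hbv : b ≠ v), a ≠ b →
      ¬ (G.induce {u | u ≠ v}).Reachable ⟨a, hav⟩ ⟨b, hbv⟩ := by
  constructor
  · intro h a b ha hb hav hbv hab hreach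
    obtain ⟨w, hw⟩ := reachable_induce_iff.1 hreach
    exact hw v (h a ha b hb hab w) rfl
  · intro h a ha b hb hab w
    by_contra hvw
    have hav : a ≠ v := fun e => hvw (e ▸ w.start_mem_support)
    have hbv : b ≠ v := fun e => hvw (e ▸ w.end_mem_support)
    exact h a b ha hb hav hbv hab (reachable_induce_iff.2 ⟨w, fun x hx e => hvw (e ▸ hx)⟩)

lemma connected_induce_insert {s : Set V} {u v : V} (hs : (G.induce s).Connected) (hv : v ∈ s)
    (huv : G.Adj u v) : (G.induce (insert u s)).Connected := by
  rw [← Set.singleton_union]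
  exact connected_induce_union Connected.of_subsingleton.preconnected hs.preconnected rfl hv huv

lemma exists_walk_of_setAdj {A B : Set V} {a b : V} (hA : (G.induce A).Connected)
    (hB : (G.induce B).Connected) (hAB : G.SetAdj A B) (ha : a ∈ A) (hb : b ∈ B) :
    ∃ w : G.Walk a b, ∀ x ∈ w.support, x ∈ A ∪ B := by
  obtain ⟨a', ha', b', hb', hadj⟩ := hAB
  exact reachable_induce_iff.1 <|
    (connected_induce_union hA.preconnected hB.preconnected ha' hb' hadj).preconnected
      ⟨a, Or.inl ha⟩ ⟨b, Or.inr hb⟩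

lemma Walk.exists_walk_adj_of_start_notMem_of_end_mem {D : Set V} {a d : V} (w : G.Walk a d)
    (ha : a ∉ D) (hd : d ∈ D) :
    ∃ (v : V) (p : G.Walk a v), (∀ x ∈ p.support, x ∈ w.support ∧ x ∉ D) ∧
      ∃ d' ∈ D, G.Adj v d' := by
  induction w with
  | nil => exact absurd hd ha
  | @cons a a' d hadj w ih =>
    by_cases ha' : a' ∈ D
    · exact ⟨a, nil, by simp [ha], a', ha', hadj⟩
    · obtain ⟨v, p, hp, hvD⟩ := ih ha' hd
      refine ⟨v, cons hadj p, ?_, hvD⟩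
      simp only [Walk.support_cons, List.mem_cons, forall_eq_or_imp, true_or, true_and]
      exact ⟨ha, fun x hx => ⟨.inr (hp x hx).1, (hp x hx).2⟩⟩

lemma exists_connected_superset_setAdj {A D : Set V} {a d : V} (hA : (G.induce A).Connected)
    (ha : a ∈ A) (w : G.Walk a d) (hd : d ∈ D) (hAD : Disjoint A D) :
    ∃ A', A ⊆ A' ∧ A' ⊆ A ∪ {x | x ∈ w.support} ∧ (G.induce A').Connected ∧
      Disjoint A' D ∧ G.SetAdj A' D := by
  obtain ⟨v, p, hp, d', hd', hvd'⟩ :=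
    w.exists_walk_adj_of_start_notMem_of_end_mem (hAD.notMem_of_mem_left ha) hd
  refine ⟨A ∪ {x | x ∈ p.support}, Set.subset_union_left,
    Set.union_subset_union_right _ fun x hx => (hp x hx).1,
    induce_union_connected hA.preconnected p.connected_induce_support.preconnected
      ⟨a, ha, p.start_mem_support⟩,
    Set.disjoint_union_left.2 ⟨hAD, Set.disjoint_left.2 fun x hx => (hp x hx).2⟩,
    v, Or.inr p.end_mem_support, d', hd', hvd'⟩

lemma not_separates_of_setAdj {A B R : Set V} {a b v : V} (hA : (G.induce A).Connected)
    (hB : (G.induce B).Connected) (hAB : G.SetAdj A B) (hdisj : Disjoint A B) (ha : a ∈ A)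
    (hb : b ∈ B) (haR : a ∈ R) (hbR : b ∈ R) (hvA : v ∉ A) (hvB : v ∉ B) :
    ¬ G.Separates v R := by
  intro hsep
  obtain ⟨w, hw⟩ := exists_walk_of_setAdj hA hB hAB ha hb
  exact (hw v (hsep a haR b hbR (hdisj.ne_of_mem ha hb) w)).elim hvA hvB

lemma RootedTriangle.not_separates {x y z : V} (h : G.RootedTriangle x y z) (v : V) :
    ¬ G.Separates v {x, y, z} := by
  obtain ⟨X, Y, Z, hX, hY, hZ, hXY, hXZ, hYZ, aXY, aXZ, aYZ, hx, hy, hz⟩ := h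
  by_cases hvX : v ∈ X
  · exact not_separates_of_setAdj hY hZ aYZ hYZ hy hz (by simp) (by simp)
      (hXY.notMem_of_mem_left hvX) (hXZ.notMem_of_mem_left hvX)
  by_cases hvY : v ∈ Y
  · exact not_separates_of_setAdj hX hZ aXZ hXZ hx hz (by simp) (by simp) hvX
      (hYZ.notMem_of_mem_left hvY)
  · exact not_separates_of_setAdj hX hY aXY hXY hx hy (by simp) (by simp) hvX hvY

lemma exists_walk_of_not_separates {a b c : V} (h : ¬ G.Separates a {a, b, c}) :
    b ≠ c ∧ ∃ w : G.Walk b c, a ∉ w.support := by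
  simp only [Separates, not_forall, exists_prop] at h
  obtain ⟨p, hp, q, hq, hpq, w, hw⟩ := h
  have hpa : p ≠ a := fun e => hw (e ▸ w.start_mem_support)
  have hqa : q ≠ a := fun e => hw (e ▸ w.end_mem_support)
  have hp' : p = b ∨ p = c := by simpa [hpa] using hp
  have hq' : q = b ∨ q = c := by simpa [hqa] using hq
  rcases hp' with rfl | rfl <;> rcases hq' with rfl | rfl
  · exact absurd rfl hpq
  · exact ⟨hpq, w, hw⟩
  · exact ⟨hpq.symm, w.reverse, by simpa using hw⟩
  · exact absurd rfl hpq

/-- Adding the hub `u` to `C` closes the triangle. -/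
lemma rootedTriangle_of_hub {A B C : Set V} {a b c u : V} (hA : (G.induce A).Connected)
    (hB : (G.induce B).Connected) (hC : (G.induce C).Connected) (hAB : Disjoint A B)
    (hAC : Disjoint A C) (hBC : Disjoint B C) (ha : a ∈ A) (hb : b ∈ B) (hc : c ∈ C)
    (huA : ∃ a' ∈ A, G.Adj u a') (huB : ∃ b' ∈ B, G.Adj u b') (huC : ∃ c' ∈ C, G.Adj u c')
    (hAu : u ∉ A) (hBu : u ∉ B) (hadj : G.SetAdj A B) : G.RootedTriangle a b c := by
  obtain ⟨a', ha', hua'⟩ := huA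
  obtain ⟨b', hb', hub'⟩ := huB
  obtain ⟨c', hc', huc'⟩ := huC
  exact ⟨A, B, insert u C, hA, hB, connected_induce_insert hC hc' huc', hAB,
    Set.disjoint_insert_right.2 ⟨hAu, hAC⟩, Set.disjoint_insert_right.2 ⟨hBu, hBC⟩, hadj,
    ⟨a', ha', u, Set.mem_insert _ _, hua'.symm⟩, ⟨b', hb', u, Set.mem_insert _ _, hub'.symm⟩,
    ha, hb, Set.mem_insert_of_mem _ hc⟩

lemma rootedTriangle_of_hub_of_walk {A B C : Set V} {a b c u p q : V}
    (hA : (G.induce A).Connected) (hB : (G.induce B).Connected) (hC : (G.induce C).Connected)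
    (hAB : Disjoint A B) (hAC : Disjoint A C) (hBC : Disjoint B C)
    (ha : a ∈ A) (hb : b ∈ B) (hc : c ∈ C)
    (huA : ∃ a' ∈ A, G.Adj u a') (huB : ∃ b' ∈ B, G.Adj u b') (huC : ∃ c' ∈ C, G.Adj u c')
    (hAu : u ∉ A) (hBu : u ∉ B) (hCu : u ∉ C)
    (w : G.Walk p q) (hp : p ∈ A) (hq : q ∈ B ∪ C) (hwu : u ∉ w.support) :
    G.RootedTriangle a b c := by
  obtain ⟨A', hAA', hA'w, hA', hA'BC, d, hd, e, he, hde⟩ :=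
    exists_connected_superset_setAdj hA hp w hq (Set.disjoint_union_right.2 ⟨hAB, hAC⟩)
  obtain ⟨hA'B, hA'C⟩ := Set.disjoint_union_right.1 hA'BC
  have hA'u : u ∉ A' := fun hu => (hA'w hu).elim hAu hwu
  have huA' : ∃ a' ∈ A', G.Adj u a' := let ⟨a', ha', hua'⟩ := huA; ⟨a', hAA' ha', hua'⟩
  rcases he with he | he
  · exact rootedTriangle_of_hub hA' hB hC hA'B hA'C hBC (hAA' ha) hb hc huA' huB huC hA'u
      hBu ⟨d, hd, e, he, hde⟩
  · exact (rootedTriangle_of_hub hA' hC hB hA'C hA'B hBC.symm (hAA' ha) hc hb huA' huC huB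
      hA'u hCu ⟨d, hd, e, he, hde⟩).swap₂₃

lemma rootedTriangle_of_hub_of_not_separates {A B C : Set V} {a b c u : V}
    (hA : (G.induce A).Connected) (hB : (G.induce B).Connected) (hC : (G.induce C).Connected)
    (hAB : Disjoint A B) (hAC : Disjoint A C) (hBC : Disjoint B C)
    (ha : a ∈ A) (hb : b ∈ B) (hc : c ∈ C)
    (huA : ∃ a' ∈ A, G.Adj u a') (huB : ∃ b' ∈ B, G.Adj u b') (huC : ∃ c' ∈ C, G.Adj u c')
    (hAu : u ∉ A) (hBu : u ∉ B) (hCu : u ∉ C) (hsep : ¬ G.Separates u {a, b, c}) :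
    G.RootedTriangle a b c := by
  simp only [Separates, not_forall, exists_prop] at hsep
  obtain ⟨p, hp, q, hq, hpq, w, hwu⟩ := hsep
  simp only [Set.mem_insert_iff, Set.mem_singleton_iff] at hp hq
  rcases hp with rfl | rfl | rfl
  · have hq' : q ∈ B ∪ C := by
      rcases hq with rfl | rfl | rfl; exacts [absurd rfl hpq, .inl hb, .inr hc]
    exact rootedTriangle_of_hub_of_walk hA hB hC hAB hAC hBC ha hb hc huA huB huC hAu hBu hCu
      w ha hq' hwu
  · have hq' : q ∈ A ∪ C := by
      rcases hq with rfl | rfl | rfl; exacts [.inl ha, absurd rfl hpq, .inr hc]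
    exact (rootedTriangle_of_hub_of_walk hB hA hC hAB.symm hBC hAC hb ha hc huB huA huC hBu hAu
      hCu w hb hq' hwu).swap₁₂
  · have hq' : q ∈ A ∪ B := by
      rcases hq with rfl | rfl | rfl; exacts [.inl ha, .inr hb, absurd rfl hpq]
    exact (rootedTriangle_of_hub_of_walk hC hA hB hAC.symm hBC.symm hAB hc ha hb huC huA huB hCu
      hAu hBu w hc hq' hwu).swap₁₂.swap₂₃

theorem rootedTriangle_of_center_walk {a b c : V} (hsep : ∀ v, ¬ G.Separates v {a, b, c}) {m : V}
    (W : G.Walk a m) {S T : Set V} (hS : (G.induce S).Connected) (hT : (G.induce T).Connected)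
    (hb : b ∈ S) (hc : c ∈ T) (hWS : Disjoint {x | x ∈ W.support} S)
    (hWT : Disjoint {x | x ∈ W.support} T) (hST : Disjoint S T)
    (hadjS : G.SetAdj {x | x ∈ W.support} S) (hadjT : G.SetAdj {x | x ∈ W.support} T) :
    G.RootedTriangle a b c := by
  induction W using Walk.concatRec generalizing S T with
  | @Hnil a =>
    obtain ⟨-, w, haw⟩ := exists_walk_of_not_separates (hsep a)
    obtain ⟨S', hSS', hS'w, hS', hS'T, hadjS'T⟩ := exists_connected_superset_setAdj hS hb w hc hST
    have hWS' : Disjoint {x | x ∈ (Walk.nil : G.Walk a a).support} S' := by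
      simpa using fun haS' => (hS'w haS').elim (hWS.notMem_of_mem_left (by simp)) haw
    exact ⟨_, S', T, Walk.nil.connected_induce_support, hS', hT, hWS', hWT, hS'T,
      hadjS.mono_right hSS', hadjT, hadjS'T, by simp, hSS' hb, hc⟩
  | @Hconcat a m u W h ih =>
    have hsupp : {x | x ∈ (W.concat h).support} = insert u {x | x ∈ W.support} := by
      ext; simp [Walk.support_concat, or_comm]
    rw [hsupp] at hWS hWT hadjS hadjT
    set M := {x | x ∈ W.support}
    by_cases huM : u ∈ M
    · rw [Set.insert_eq_of_mem huM] at hWS hWT hadjS hadjT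
      exact ih hsep hS hT hb hc hWS hWT hST hadjS hadjT
    obtain ⟨huS, hMS⟩ := Set.disjoint_insert_left.1 hWS
    obtain ⟨huT, hMT⟩ := Set.disjoint_insert_left.1 hWT
    have hmM : m ∈ M := W.end_mem_support
    by_cases hMS' : G.SetAdj M S <;> by_cases hMT' : G.SetAdj M T
    · exact ih hsep hS hT hb hc hMS hMT hST hMS' hMT'
    · obtain ⟨t, ht, hut⟩ := hadjT.exists_adj_of_not_setAdj hMT'
      exact ih hsep hS (connected_induce_insert hT ht hut) hb (Set.mem_insert_of_mem _ hc) hMS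
        (Set.disjoint_insert_right.2 ⟨huM, hMT⟩) (Set.disjoint_insert_right.2 ⟨huS, hST⟩) hMS'
        ⟨m, hmM, u, Set.mem_insert _ _, h⟩
    · obtain ⟨s, hs, hus⟩ := hadjS.exists_adj_of_not_setAdj hMS'
      exact ih hsep (connected_induce_insert hS hs hus) hT (Set.mem_insert_of_mem _ hb) hc
        (Set.disjoint_insert_right.2 ⟨huM, hMS⟩) hMT (Set.disjoint_insert_left.2 ⟨huT, hST⟩)
        ⟨m, hmM, u, Set.mem_insert _ _, h⟩ hMT'
    · obtain ⟨s, hs, hus⟩ := hadjS.exists_adj_of_not_setAdj hMS'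
      obtain ⟨t, ht, hut⟩ := hadjT.exists_adj_of_not_setAdj hMT'
      exact rootedTriangle_of_hub_of_not_separates W.connected_induce_support hS hT hMS hMT hST
        W.start_mem_support hb hc ⟨m, hmM, h.symm⟩ ⟨s, hs, hus⟩ ⟨t, ht, hut⟩ huM huS huT (hsep u)

theorem rootedTriangle_of_forall_not_separates {x y z : V}
    (hsep : ∀ v, ¬ G.Separates v {x, y, z}) : G.RootedTriangle x y z := by
  obtain ⟨hyz, w₁, hxw₁⟩ := exists_walk_of_not_separates (hsep x)
  obtain ⟨hxz, w₂, -⟩ :=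
    exists_walk_of_not_separates (a := y) (b := x) (c := z) (Set.insert_comm x y {z} ▸ hsep y)
  obtain ⟨v₁, p₁, hp₁, z', hz', hv₁z'⟩ :=
    w₁.exists_walk_adj_of_start_notMem_of_end_mem (D := {z}) hyz rfl
  have hv₁z : G.Adj v₁ z := (hz' : z' = z) ▸ hv₁z'
  set B := {t | t ∈ p₁.support}
  have hxB : x ∉ B := fun hx => hxw₁ (hp₁ x hx).1
  obtain ⟨v₂, p₂, hp₂, d, hd, hv₂d⟩ :=
    w₂.exists_walk_adj_of_start_notMem_of_end_mem (D := B ∪ {z}) (by simp [hxB, hxz]) (.inr rfl)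
  set X := {t | t ∈ p₂.support}
  have hXBz : Disjoint X (B ∪ {z}) := Set.disjoint_left.2 fun t ht => (hp₂ t ht).2
  obtain ⟨hXB, hXz⟩ := Set.disjoint_union_right.1 hXBz
  have hBz : Disjoint B {z} := Set.disjoint_left.2 fun t ht => (hp₁ t ht).2
  rcases hd with hd | rfl
  · have hsep' : ∀ v, ¬ G.Separates v {y, x, z} := Set.insert_comm x y {z} ▸ hsep
    exact (rootedTriangle_of_center_walk hsep' p₁ (T := {z}) p₂.connected_induce_support
      Connected.of_subsingleton p₂.start_mem_support rfl hXB.symm hBz hXz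
      ⟨d, hd, v₂, p₂.end_mem_support, hv₂d.symm⟩ ⟨v₁, p₁.end_mem_support, z, rfl, hv₁z⟩).swap₁₂
  · have hsep' : ∀ v, ¬ G.Separates v {d, x, y} := by
      rwa [Set.insert_comm d, Set.pair_comm d]
    exact (rootedTriangle_of_center_walk hsep' (Walk.nil : G.Walk d d) p₂.connected_induce_support
      p₁.connected_induce_support p₂.start_mem_support p₁.start_mem_support (by simpa [X] using hXz)
      (by simpa [B] using hBz) hXB ⟨d, by simp, v₂, p₂.end_mem_support, hv₂d.symm⟩
      ⟨d, by simp, v₁, p₁.end_mem_support, hv₁z.symm⟩).swap₁₂.swap₂₃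

end SimpleGraph

theorem rooted_K3_minor_iff_general {V : Type} (H : SimpleGraph V) (x y z : V) :
    (∃ X Y Z : Set V,
      (H.induce X).Connected ∧ (H.induce Y).Connected ∧ (H.induce Z).Connected ∧
      Disjoint X Y ∧ Disjoint X Z ∧ Disjoint Y Z ∧
      (∃ a ∈ X, ∃ b ∈ Y, H.Adj a b) ∧
      (∃ a ∈ X, ∃ b ∈ Z, H.Adj a b) ∧
      (∃ a ∈ Y, ∃ b ∈ Z, H.Adj a b) ∧
      x ∈ X ∧ y ∈ Y ∧ z ∈ Z) ↔
    ¬ ∃ v : V, ∀ a b : V, a ∈ ({x, y, z} : Set V) → b ∈ ({x, y, z} : Set V) →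
      ∀ (hav : a ≠ v) (hbv : b ≠ v), a ≠ b →
        ¬ (H.induce {u | u ≠ v}).Reachable ⟨a, hav⟩ ⟨b, hbv⟩ := by
  simp only [← separates_iff_not_reachable, not_exists]
  exact ⟨RootedTriangle.not_separates, rootedTriangle_of_forall_not_separates⟩

/-- Let `x`, `y`, `z` be distinct vertices of a graph `H`. There is a
`K₃`-minor of `H` rooted at `{x, y, z}` (three pairwise-disjoint, pairwise-adjacent
connected fragments containing `x`, `y`, `z` respectively) if and only if there is no
vertex `v` for which the vertices of `{x, y, z} \ {v}` lie in distinct connected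
components of `H - v`. -/
theorem rooted_K3_minor_iff {V : Type} [Fintype V] (H : SimpleGraph V) (x y z : V)
    (hxy : x ≠ y) (hxz : x ≠ z) (hyz : y ≠ z) :
    (∃ X Y Z : Set V,
      (H.induce X).Connected ∧ (H.induce Y).Connected ∧ (H.induce Z).Connected ∧
      Disjoint X Y ∧ Disjoint X Z ∧ Disjoint Y Z ∧
      (∃ a ∈ X, ∃ b ∈ Y, H.Adj a b) ∧
      (∃ a ∈ X, ∃ b ∈ Z, H.Adj a b) ∧
      (∃ a ∈ Y, ∃ b ∈ Z, H.Adj a b) ∧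
      x ∈ X ∧ y ∈ Y ∧ z ∈ Z) ↔
    ¬ ∃ v : V, ∀ a b : V, a ∈ ({x, y, z} : Set V) → b ∈ ({x, y, z} : Set V) →
      ∀ (hav : a ≠ v) (hbv : b ≠ v), a ≠ b →
        ¬ (H.induce {u | u ≠ v}).Reachable ⟨a, hav⟩ ⟨b, hbv⟩ :=
  rooted_K3_minor_iff_general H x y z
end
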